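/- Let 0 < r1 ≤ r2, let n be an integer with 2 ≤ n ≤ 5, and let Ω be an isoperimetric region of volume v in S^1_{r1} × S^1_{r2} × R^n such that 0 < θ_m < β_n(r2) < θ_M and 0 < σ_m < β_n(r1) < σ_M. Then I_{S^1_{r2}×R^{n+1}}(v) − 2β_n(r2) ≤ I_{S^1_{r1}×S^1_{r2}×R^n}(v) and I_{S^1_{r1}×R^{n+1}}(v) − 2β_n(r1) ≤ I_{S^1_{r1}×S^1_{r2}×R^n}(v). -/

import Mathlib

open MeasureTheory Real ENNReal NNReal

noncomputable section

/-- The flat circle of radius `r` (circumference `2πr`), i.e. `ℝ / (2πr)ℤ`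
with the quotient (arc-length) metric. -/
abbrev Circ (r : ℝ) : Type := AddCircle (2 * Real.pi * r)

/-- `d`-dimensional Hausdorff (Riemannian) measure of a subset of a metric space. -/
noncomputable def haus (X : Type*) [EMetricSpace X] (d : ℕ) (s : Set X) : ℝ≥0∞ :=
  letI : MeasurableSpace X := borel X
  haveI : BorelSpace X := ⟨rfl⟩
  (MeasureTheory.Measure.hausdorffMeasure (d : ℝ) : Measure X) s

/-- A closed region is the closure of an open set. -/
def IsClosedRegion {X : Type*} [TopologicalSpace X] (U : Set X) : Prop :=
  ∃ V : Set X, IsOpen V ∧ U = closure V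

/-- The isoperimetric profile of an `m`-dimensional space `X`:
the infimum of the `(m-1)`-dimensional boundary measures of closed regions
of `m`-dimensional measure `v`. -/
noncomputable def isoProfile (X : Type*) [EMetricSpace X] (m : ℕ) (v : ℝ≥0∞) : ℝ≥0∞ :=
  ⨅ (U : Set X) (_ : IsClosedRegion U ∧ haus X m U = v), haus X (m - 1) (frontier U)

/-- An isoperimetric region in the `m`-dimensional space `X`. -/
def IsIsoRegion (X : Type*) [EMetricSpace X] (m : ℕ) (Ω : Set X) : Prop :=
  IsClosedRegion Ω ∧ haus X (m - 1) (frontier Ω) = isoProfile X m (haus X m Ω)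

/-- Euclidean `n`-space. -/
abbrev EucSp (n : ℕ) : Type := EuclideanSpace ℝ (Fin n)

/-- The Riemannian product `S¹_r × ℝ^m` (with the `ℓ²` product metric). -/
abbrev S1R (r : ℝ) (m : ℕ) : Type := WithLp 2 (Circ r × EucSp m)

/-- The Riemannian product `S¹_{r1} × S¹_{r2} × ℝ^n = T² × ℝ^n`. -/
abbrev T2R (r1 r2 : ℝ) (n : ℕ) : Type := WithLp 2 (Circ r1 × S1R r2 n)

/-- first circle coordinate of a point of `T² × ℝ^n` -/
def t2fst {r1 r2 : ℝ} {n : ℕ} (p : T2R r1 r2 n) : Circ r1 :=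
  (WithLp.equiv 2 (Circ r1 × S1R r2 n) p).1

/-- second circle coordinate of a point of `T² × ℝ^n` -/
def t2snd {r1 r2 : ℝ} {n : ℕ} (p : T2R r1 r2 n) : Circ r2 :=
  (WithLp.equiv 2 (Circ r2 × EucSp n) ((WithLp.equiv 2 (Circ r1 × S1R r2 n) p).2)).1

/-- Euclidean coordinate of a point of `T² × ℝ^n` -/
def t2euc {r1 r2 : ℝ} {n : ℕ} (p : T2R r1 r2 n) : EucSp n :=
  (WithLp.equiv 2 (Circ r2 × EucSp n) ((WithLp.equiv 2 (Circ r1 × S1R r2 n) p).2)).2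

/-- `ω_n`, the `n`-dimensional volume of the unit round sphere `Sⁿ ⊂ ℝ^{n+1}`. -/
noncomputable def omegaS (n : ℕ) : ℝ :=
  (haus (EucSp (n+1)) n (Metric.sphere (0 : EucSp (n+1)) 1)).toReal

/-- `β_n(r) = n^{(n-1)(n+1)} (2πr ω_{n-1})^{n+1} (1+n)^{-n²} ω_n^{-n}`. -/
noncomputable def betaC (n : ℕ) (r : ℝ) : ℝ :=
  (n : ℝ) ^ ((n-1)*(n+1)) * (2 * Real.pi * r * omegaS (n-1)) ^ (n+1) *
    ((1 + (n : ℝ)) ^ (n^2))⁻¹ * ((omegaS n) ^ n)⁻¹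

/-- The isoperimetric profile of `ℝ^m`: `I_{ℝ^m}(v) = m^{(m-1)/m} ω_{m-1}^{1/m} v^{(m-1)/m}`. -/
noncomputable def eucProfile (m : ℕ) (v : ℝ) : ℝ :=
  (m : ℝ) ^ (((m : ℝ) - 1)/m) * omegaS (m-1) ^ ((1 : ℝ)/m) * v ^ (((m : ℝ) - 1)/m)

/-- The region `S¹_{r1} × S¹_{r2} × B^n_R` in `T² × ℝ^n`. -/
def tball (r1 r2 : ℝ) (n : ℕ) (R : ℝ) : Set (T2R r1 r2 n) :=
  {p | ‖t2euc p‖ ≤ R}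

/-- `f_n(v) = V^{n+1}(∂(S¹_{r1} × S¹_{r2} × B^n_R))`, where `R > 0` is such that
`V^{n+2}(S¹_{r1} × S¹_{r2} × B^n_R) = v`. -/
noncomputable def fA (r1 r2 : ℝ) (n : ℕ) (v : ℝ≥0∞) : ℝ≥0∞ :=
  ⨅ (R : ℝ) (_ : 0 < R ∧ haus (T2R r1 r2 n) (n+2) (tball r1 r2 n R) = v),
    haus (T2R r1 r2 n) (n+1) (frontier (tball r1 r2 n R))

/-- The slice function `F₁(t) = V^{n+1}(Ω ∩ ({t} × S¹_{r2} × ℝ^n))`. -/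
noncomputable def sliceF1 {r1 r2 : ℝ} {n : ℕ} (Ω : Set (T2R r1 r2 n)) (t : Circ r1) : ℝ≥0∞ :=
  haus (T2R r1 r2 n) (n+1) (Ω ∩ {p | t2fst p = t})

/-- The slice function `F₂(s) = V^{n+1}(Ω ∩ (S¹_{r1} × {s} × ℝ^n))`. -/
noncomputable def sliceF2 {r1 r2 : ℝ} {n : ℕ} (Ω : Set (T2R r1 r2 n)) (s : Circ r2) : ℝ≥0∞ :=
  haus (T2R r1 r2 n) (n+1) (Ω ∩ {p | t2snd p = s})

/-- `θ_m`, the minimum (infimum) of the slice function `F₁`. -/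
noncomputable def thetaMin {r1 r2 : ℝ} {n : ℕ} (Ω : Set (T2R r1 r2 n)) : ℝ≥0∞ :=
  ⨅ t : Circ r1, sliceF1 Ω t

/-- `θ_M`, the maximum (supremum) of the slice function `F₁`. -/
noncomputable def thetaMax {r1 r2 : ℝ} {n : ℕ} (Ω : Set (T2R r1 r2 n)) : ℝ≥0∞ :=
  ⨆ t : Circ r1, sliceF1 Ω t

/-- `σ_m`, the minimum (infimum) of the slice function `F₂`. -/
noncomputable def sigmaMin {r1 r2 : ℝ} {n : ℕ} (Ω : Set (T2R r1 r2 n)) : ℝ≥0∞ :=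
  ⨅ s : Circ r2, sliceF2 Ω s

/-- `σ_M`, the maximum (supremum) of the slice function `F₂`. -/
noncomputable def sigmaMax {r1 r2 : ℝ} {n : ℕ} (Ω : Set (T2R r1 r2 n)) : ℝ≥0∞ :=
  ⨆ s : Circ r2, sliceF2 Ω s

/-- The region `S¹_r × B^m_R` in `S¹_r × ℝ^m`. -/
def s1ball (r : ℝ) (m : ℕ) (R : ℝ) : Set (S1R r m) :=
  {p | ‖(WithLp.equiv 2 (Circ r × EucSp m) p).2‖ ≤ R}

/-!
Since `θ_m < β_n(r₂)`, some slice `Ω ∩ ({t} × S¹_{r₂} × ℝⁿ)` has `(n+1)`-measure below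
`β_n(r₂)`. Cutting the first circle open at `t = a mod 2πr₁` unrolls `S¹_{r₁} × S¹_{r₂} × ℝⁿ`
onto the strip `[a, a + 2πr₁] × S¹_{r₂} × ℝⁿ ⊂ ℝ × S¹_{r₂} × ℝⁿ ≅ S¹_{r₂} × ℝ^{n+1}`.
The unrolled region has the volume of `Ω`, since the cut slices are `(n+2)`-null, and its
boundary lies in the unrolled `∂Ω` together with two copies of the slice, one on each edge of
the strip. Hence `I_{S¹_{r₂}×ℝ^{n+1}}(v) ≤ I_{T²×ℝⁿ}(v) + 2β_n(r₂)`; swapping the circles gives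
the other bound.
-/

open Set Function

section Hausdorff

variable {X Y : Type*} [EMetricSpace X] [EMetricSpace Y] {d : ℕ}

lemma haus_mono {s t : Set X} (h : s ⊆ t) : haus X d s ≤ haus X d t :=
  measure_mono h

lemma haus_union_le (s t : Set X) : haus X d (s ∪ t) ≤ haus X d s + haus X d t :=
  measure_union_le s t

lemma haus_inter_add_sdiff (s : Set X) {P : Set X} (hP : MeasurableSet[borel X] P) :
    haus X d (s ∩ P) + haus X d (s \ P) = haus X d s :=
  measure_inter_add_sdiff s hP

lemma Isometry.haus_image {f : X → Y} (hf : Isometry f) (s : Set X) :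
    haus Y d (f '' s) = haus X d s := by
  borelize X Y
  exact hf.hausdorffMeasure_image (Or.inl d.cast_nonneg) s

lemma LipschitzOnWith.haus_image_le {f : X → Y} {s : Set X} (hf : LipschitzOnWith 1 f s) :
    haus Y d (f '' s) ≤ haus X d s := by
  borelize X Y
  have h := hf.hausdorffMeasure_image_le (d := d) d.cast_nonneg
  rwa [ENNReal.coe_one, ENNReal.one_rpow, one_mul] at h

lemma haus_image_le_of_lipschitzOnWith_compl {f : X → Y} {P : Set X}
    (hP : MeasurableSet[borel X] P) (hfP : LipschitzOnWith 1 f P) (hfPc : LipschitzOnWith 1 f Pᶜ)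
    (s : Set X) : haus Y d (f '' s) ≤ haus X d s :=
  calc haus Y d (f '' s) = haus Y d (f '' (s ∩ P) ∪ f '' (s \ P)) := by
        rw [← image_union, inter_union_sdiff]
    _ ≤ haus Y d (f '' (s ∩ P)) + haus Y d (f '' (s \ P)) := haus_union_le _ _
    _ ≤ haus X d (s ∩ P) + haus X d (s \ P) :=
        add_le_add (hfP.mono inter_subset_right).haus_image_le
          (hfPc.mono (sdiff_subset_compl s P)).haus_image_le
    _ = haus X d s := haus_inter_add_sdiff s hP

lemma haus_univ_eq_zero_of_lipschitzWith {E : Type*} [NormedAddCommGroup E] [NormedSpace ℝ E]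
    [FiniteDimensional ℝ E] {f : E → X} {K : ℝ≥0} (hf : LipschitzWith K f)
    (hsurj : Surjective f) (hd : Module.finrank ℝ E < d) : haus X d univ = 0 := by
  borelize X
  have hdim : dimH (univ : Set X) < ((d : ℝ≥0) : ℝ≥0∞) := by
    calc dimH (univ : Set X) = dimH (range f) := by rw [hsurj.range_eq]
      _ ≤ dimH (univ : Set E) := hf.dimH_range_le
      _ = Module.finrank ℝ E := Real.dimH_univ_eq_finrank E
      _ < ((d : ℝ≥0) : ℝ≥0∞) := by exact_mod_cast hd
  exact_mod_cast hausdorffMeasure_of_dimH_lt hdim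

end Hausdorff

section Profile

variable {X Y : Type*} [EMetricSpace X] [EMetricSpace Y] {m : ℕ}

lemma isoProfile_le_haus_frontier {U : Set X} (hU : IsClosedRegion U) :
    isoProfile X m (haus X m U) ≤ haus X (m - 1) (frontier U) :=
  iInf₂_le U ⟨hU, rfl⟩

lemma IsClosedRegion.image (φ : X ≃ᵢ Y) {U : Set X} (hU : IsClosedRegion U) :
    IsClosedRegion (φ '' U) := by
  obtain ⟨V, hV, rfl⟩ := hU
  exact ⟨φ '' V, φ.toHomeomorph.isOpenMap V hV, φ.toHomeomorph.image_closure V⟩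

lemma haus_frontier_image (φ : X ≃ᵢ Y) (d : ℕ) (U : Set X) :
    haus Y d (frontier (φ '' U)) = haus X d (frontier U) := by
  rw [← φ.isometry.haus_image]
  exact congrArg _ (φ.toHomeomorph.image_frontier U).symm

lemma isoProfile_le_of_isometryEquiv (φ : X ≃ᵢ Y) (v : ℝ≥0∞) :
    isoProfile Y m v ≤ isoProfile X m v := by
  refine le_iInf₂ fun U ⟨hU, hv⟩ => ?_
  rw [← hv, ← φ.isometry.haus_image, ← haus_frontier_image φ]
  exact isoProfile_le_haus_frontier (hU.image φ)

lemma isoProfile_congr (φ : X ≃ᵢ Y) (v : ℝ≥0∞) : isoProfile Y m v = isoProfile X m v :=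
  le_antisymm (isoProfile_le_of_isometryEquiv φ v) (isoProfile_le_of_isometryEquiv φ.symm v)

lemma IsIsoRegion.image (φ : X ≃ᵢ Y) {Ω : Set X} (hΩ : IsIsoRegion X m Ω) :
    IsIsoRegion Y m (φ '' Ω) := by
  refine ⟨hΩ.1.image φ, ?_⟩
  rw [haus_frontier_image, φ.isometry.haus_image, isoProfile_congr φ]
  exact hΩ.2

end Profile

section ProdL2

variable {α β : Type*} [MetricSpace α] [MetricSpace β]

lemma dist_withLp_prod_two (x y : WithLp 2 (α × β)) :
    dist x y = √(dist x.fst y.fst ^ 2 + dist x.snd y.snd ^ 2) := by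
  rw [WithLp.prod_dist_eq_add (by norm_num), Real.sqrt_eq_rpow]
  norm_num

lemma isometry_toLp_prodMk (a : α) : Isometry fun b : β => WithLp.toLp 2 (a, b) :=
  Isometry.of_dist_eq fun b b' => by simp [dist_withLp_prod_two, Real.sqrt_sq dist_nonneg]

lemma haus_inter_fst_eq (A : Set (WithLp 2 (α × β))) (a : α) (d : ℕ) :
    haus (WithLp 2 (α × β)) d (A ∩ {q | q.fst = a}) =
      haus β d {b | WithLp.toLp 2 (a, b) ∈ A} := by
  rw [← (isometry_toLp_prodMk a).haus_image {b : β | WithLp.toLp 2 (a, b) ∈ A}]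
  refine congrArg _ (ext fun q => ?_)
  constructor
  · rintro ⟨hq, rfl⟩
    exact ⟨q.snd, hq, rfl⟩
  · rintro ⟨b, hb, rfl⟩
    exact ⟨hb, rfl⟩

lemma LipschitzOnWith.withLpProdMap_id {α' : Type*} [MetricSpace α'] {f : α → α'} {s : Set α}
    (hf : LipschitzOnWith 1 f s) :
    LipschitzOnWith 1 (WithLp.map 2 (Prod.map f (id : β → β))) (WithLp.fst ⁻¹' s) := by
  refine LipschitzOnWith.of_dist_le_mul fun x hx y hy => ?_
  rw [NNReal.coe_one, one_mul, dist_withLp_prod_two, dist_withLp_prod_two]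
  have h := hf.dist_le_mul x.fst hx y.fst hy
  rw [NNReal.coe_one, one_mul] at h
  simp only [WithLp.map, WithLp.toLp_fst, WithLp.toLp_snd]
  gcongr
  exacts [h, le_rfl]

end ProdL2

lemma IsClosedRegion.isClosed {X : Type*} [TopologicalSpace X] {U : Set X}
    (hU : IsClosedRegion U) : IsClosed U := by
  obtain ⟨V, -, rfl⟩ := hU
  exact isClosed_closure

lemma IsClosedRegion.subset_closure_interior {X : Type*} [TopologicalSpace X] {U : Set X}
    (hU : IsClosedRegion U) : U ⊆ closure (interior U) := by
  obtain ⟨V, hV, rfl⟩ := hU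
  exact closure_mono (hV.subset_interior_iff.mpr subset_closure)

namespace AddCircle

variable {p : ℝ}

lemma lipschitzWith_coe : LipschitzWith 1 ((↑) : ℝ → AddCircle p) :=
  LipschitzWith.of_dist_le_mul fun x y => by
    rw [NNReal.coe_one, one_mul, dist_eq_norm, ← coe_sub, Real.dist_eq, ← Real.norm_eq_abs]
    exact QuotientAddGroup.norm_mk_le_norm

lemma dist_coe_eq_abs (hp : p ≠ 0) {x y : ℝ} (h : |x - y| ≤ |p| / 2) :
    dist (x : AddCircle p) y = |x - y| := by
  rw [dist_eq_norm, ← coe_sub]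
  exact (norm_coe_eq_abs_iff p hp).mpr h

variable [hp : Fact (0 < p)]

lemma lipschitzOnWith_equivIco (a b : ℝ) :
    LipschitzOnWith 1 (fun t => (equivIco p a t : ℝ))
      {t | (equivIco p a t : ℝ) ∈ Icc b (b + p / 2)} :=
  LipschitzOnWith.of_dist_le_mul fun t ht t' ht' => by
    have hclose : |(equivIco p a t : ℝ) - equivIco p a t'| ≤ |p| / 2 := by
      rw [abs_of_pos hp.out, abs_sub_le_iff]
      constructor <;> linarith [ht.1, ht.2, ht'.1, ht'.2]
    rw [NNReal.coe_one, one_mul, Real.dist_eq, ← dist_coe_eq_abs hp.out.ne' hclose,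
      coe_equivIco, coe_equivIco]

lemma equivIco_mem_Ioo {a : ℝ} {t : AddCircle p} (ht : t ≠ a) :
    (equivIco p a t : ℝ) ∈ Ioo a (a + p) := by
  obtain ⟨h1, h2⟩ := (equivIco p a t).2
  refine ⟨h1.lt_of_ne fun h => ht ?_, h2⟩
  rw [← coe_equivIco (a := a) (y := t), ← h]

end AddCircle

section Wrap

variable {Z : Type*}

def wrapFst (p : ℝ) : WithLp 2 (ℝ × Z) → WithLp 2 (AddCircle p × Z) :=
  WithLp.map 2 (Prod.map (↑) id)

variable {p : ℝ}

lemma wrapFst_surjective : Surjective (wrapFst p : WithLp 2 (ℝ × Z) → _) := fun q => by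
  obtain ⟨x, hx⟩ := QuotientAddGroup.mk_surjective q.fst
  exact ⟨WithLp.toLp 2 (x, q.snd), (WithLp.ext_iff 2).2 (Prod.ext hx rfl)⟩

variable [MetricSpace Z]

lemma lipschitzWith_wrapFst : LipschitzWith 1 (wrapFst p : WithLp 2 (ℝ × Z) → _) := by
  have h := (AddCircle.lipschitzWith_coe (p := p).lipschitzOnWith (s := univ)).withLpProdMap_id
    (β := Z)
  rwa [preimage_univ, lipschitzOnWith_univ] at h

lemma isOpenMap_wrapFst : IsOpenMap (wrapFst p : WithLp 2 (ℝ × Z) → _) :=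
  ((WithLp.homeomorphProd 2 (AddCircle p) Z).symm.isOpenMap.comp
    ((QuotientAddGroup.isOpenMap_coe).prodMap IsOpenMap.id)).comp
    (WithLp.homeomorphProd 2 ℝ Z).isOpenMap

/-- `U` cut open along the slice over `(a : AddCircle p)` and laid out over the strip
`[a, a + p] × Z`. -/
def unroll (a : ℝ) (U : Set (WithLp 2 (AddCircle p × Z))) : Set (WithLp 2 (ℝ × Z)) :=
  closure (wrapFst p ⁻¹' interior U ∩ WithLp.fst ⁻¹' Ioo a (a + p))

lemma isOpen_preimage_interior_inter_strip (a : ℝ) (U : Set (WithLp 2 (AddCircle p × Z))) :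
    IsOpen (wrapFst p ⁻¹' interior U ∩ WithLp.fst ⁻¹' Ioo a (a + p)) :=
  (isOpen_interior.preimage lipschitzWith_wrapFst.continuous).inter
    (isOpen_Ioo.preimage (WithLp.continuous_fst 2 _ _))

lemma isClosedRegion_unroll (a : ℝ) (U : Set (WithLp 2 (AddCircle p × Z))) :
    IsClosedRegion (unroll a U) :=
  ⟨_, isOpen_preimage_interior_inter_strip a U, rfl⟩

variable {U : Set (WithLp 2 (AddCircle p × Z))}

lemma unroll_subset_preimage (hU : IsClosed U) (a : ℝ) : unroll a U ⊆ wrapFst p ⁻¹' U :=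
  closure_minimal (inter_subset_left.trans (preimage_mono interior_subset))
    (hU.preimage lipschitzWith_wrapFst.continuous)

lemma unroll_subset_preimage_Icc (a : ℝ) (U : Set (WithLp 2 (AddCircle p × Z))) :
    unroll a U ⊆ WithLp.fst ⁻¹' Icc a (a + p) :=
  closure_minimal (inter_subset_right.trans (preimage_mono Ioo_subset_Icc_self))
    (isClosed_Icc.preimage (WithLp.continuous_fst 2 _ _))

lemma preimage_inter_subset_unroll (hU : IsClosedRegion U) (a : ℝ) :
    wrapFst p ⁻¹' U ∩ WithLp.fst ⁻¹' Ioo a (a + p) ⊆ unroll a U :=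
  calc wrapFst p ⁻¹' U ∩ WithLp.fst ⁻¹' Ioo a (a + p)
      ⊆ WithLp.fst ⁻¹' Ioo a (a + p) ∩ closure (wrapFst p ⁻¹' interior U) := by
        rw [inter_comm]
        exact inter_subset_inter_right _ ((preimage_mono hU.subset_closure_interior).trans
          isOpenMap_wrapFst.preimage_closure_subset_closure_preimage)
    _ ⊆ unroll a U := by
        rw [unroll, inter_comm (wrapFst p ⁻¹' _)]
        exact (isOpen_Ioo.preimage (WithLp.continuous_fst 2 _ _)).inter_closure

lemma haus_unroll_inter_fst_le (hU : IsClosed U) (a b : ℝ) (d : ℕ) :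
    haus _ d (unroll a U ∩ {y | y.fst = b}) ≤ haus _ d (U ∩ {q | q.fst = (b : AddCircle p)}) := by
  rw [haus_inter_fst_eq, haus_inter_fst_eq]
  exact haus_mono fun z hz => unroll_subset_preimage hU a hz

end Wrap

section Unwrap

variable {p : ℝ} [Fact (0 < p)] {Z : Type*}

def unwrapFst (a : ℝ) : WithLp 2 (AddCircle p × Z) → WithLp 2 (ℝ × Z) :=
  WithLp.map 2 (Prod.map (fun t => (AddCircle.equivIco p a t : ℝ)) id)

lemma wrapFst_unwrapFst (a : ℝ) (q : WithLp 2 (AddCircle p × Z)) :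
    wrapFst p (unwrapFst a q) = q :=
  (WithLp.ext_iff 2).2 (Prod.ext AddCircle.coe_equivIco rfl)

lemma unwrapFst_wrapFst {a : ℝ} {y : WithLp 2 (ℝ × Z)} (hy : y.fst ∈ Ico a (a + p)) :
    unwrapFst a (wrapFst p y) = y :=
  (WithLp.ext_iff 2).2 (Prod.ext (AddCircle.equivIco_coe_of_mem hy) rfl)

variable [MetricSpace Z]

/-- `unwrapFst a` is an isometry on each half `[a, a + p/2)`, `[a + p/2, a + p)` of the
fundamental domain. -/
lemma haus_image_unwrapFst_le (a : ℝ) (d : ℕ) (s : Set (WithLp 2 (AddCircle p × Z))) :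
    haus _ d (unwrapFst a '' s) ≤ haus _ d s := by
  set P : Set (WithLp 2 (AddCircle p × Z)) :=
    WithLp.fst ⁻¹' {t | (AddCircle.equivIco p a t : ℝ) ∈ Ico a (a + p / 2)}
  have hP : MeasurableSet[borel _] P := by
    borelize (WithLp 2 (AddCircle p × Z))
    exact (measurable_subtype_coe.comp (AddCircle.measurableEquivIco p a).measurable).comp
      (WithLp.continuous_fst 2 _ _).measurable measurableSet_Ico
  refine haus_image_le_of_lipschitzOnWith_compl hP ?_ ?_ s
  · refine ((AddCircle.lipschitzOnWith_equivIco a a).withLpProdMap_id).mono ?_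
    exact preimage_mono fun t ht => Ico_subset_Icc_self ht
  · refine ((AddCircle.lipschitzOnWith_equivIco a (a + p / 2)).withLpProdMap_id).mono ?_
    intro q hq
    have h := (AddCircle.equivIco p a q.fst).2
    exact ⟨not_lt.mp fun hlt => hq ⟨h.1, hlt⟩, by linarith [h.2]⟩

end Unwrap

section Cut

variable {Z : Type*} [MetricSpace Z] {d : ℕ}

lemma haus_le_of_subset_preimage_Icc {a b : ℝ} {s : Set (WithLp 2 (ℝ × Z))}
    (hs : s ⊆ WithLp.fst ⁻¹' Icc a b) :
    haus _ d s ≤ haus _ d (s ∩ WithLp.fst ⁻¹' Ioo a b) + haus _ d (s ∩ {y | y.fst = a})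
      + haus _ d (s ∩ {y | y.fst = b}) := by
  have hcover :
      s ⊆ (s ∩ WithLp.fst ⁻¹' Ioo a b ∪ s ∩ {y | y.fst = a}) ∪ s ∩ {y | y.fst = b} := by
    intro y hy
    rcases eq_endpoints_or_mem_Ioo_of_mem_Icc (hs hy) with h | h | h
    · exact Or.inl (Or.inr ⟨hy, h⟩)
    · exact Or.inr ⟨hy, h⟩
    · exact Or.inl (Or.inl ⟨hy, h⟩)
  exact (haus_mono hcover).trans
    ((haus_union_le _ _).trans (add_le_add_left (haus_union_le _ _) _))

lemma haus_inter_fst_eq_zero {α : Type*} [MetricSpace α] (hZ : haus Z d univ = 0)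
    (A : Set (WithLp 2 (α × Z))) (a : α) : haus _ d (A ∩ {q | q.fst = a}) = 0 := by
  rw [haus_inter_fst_eq]
  exact nonpos_iff_eq_zero.mp (hZ ▸ haus_mono (subset_univ _))

variable {p : ℝ} [Fact (0 < p)] {U : Set (WithLp 2 (AddCircle p × Z))}

lemma frontier_unroll_inter_subset (hU : IsClosed U) (a : ℝ) :
    frontier (unroll a U) ∩ WithLp.fst ⁻¹' Ioo a (a + p) ⊆ unwrapFst a '' frontier U := by
  rintro y ⟨hy, hyI⟩
  refine ⟨wrapFst p y, ?_, unwrapFst_wrapFst (Ioo_subset_Ico_self hyI)⟩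
  rw [hU.frontier_eq]
  refine ⟨unroll_subset_preimage hU a ((isClosedRegion_unroll a U).isClosed.frontier_subset hy),
    fun hint => hy.2 ?_⟩
  exact interior_maximal subset_closure (isOpen_preimage_interior_inter_strip a U) ⟨hint, hyI⟩

lemma haus_unroll (hZ : haus Z (d + 1) univ = 0) (hU : IsClosedRegion U) (a : ℝ) :
    haus _ (d + 1) (unroll a U) = haus _ (d + 1) U := by
  set L : Set (WithLp 2 (AddCircle p × Z)) := {q | q.fst = (a : AddCircle p)}
  apply le_antisymm
  · calc haus _ (d + 1) (unroll a U)
        ≤ haus _ (d + 1) (unroll a U ∩ WithLp.fst ⁻¹' Ioo a (a + p)) + _ + _ :=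
          haus_le_of_subset_preimage_Icc (unroll_subset_preimage_Icc a U)
      _ = haus _ (d + 1) (unroll a U ∩ WithLp.fst ⁻¹' Ioo a (a + p)) := by
          rw [haus_inter_fst_eq_zero hZ, haus_inter_fst_eq_zero hZ, add_zero, add_zero]
      _ ≤ haus _ (d + 1) (unwrapFst a '' U) := haus_mono fun y ⟨hy, hyI⟩ =>
          ⟨wrapFst p y, unroll_subset_preimage hU.isClosed a hy,
            unwrapFst_wrapFst (Ioo_subset_Ico_self hyI)⟩
      _ ≤ haus _ (d + 1) U := haus_image_unwrapFst_le a _ U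
  · have hcut : U \ L ⊆ wrapFst p '' unroll a U := fun q ⟨hq, hqa⟩ =>
      ⟨unwrapFst a q, preimage_inter_subset_unroll hU a
        ⟨by rwa [mem_preimage, wrapFst_unwrapFst], AddCircle.equivIco_mem_Ioo hqa⟩,
        wrapFst_unwrapFst a q⟩
    calc haus _ (d + 1) U ≤ haus _ (d + 1) (U ∩ L) + haus _ (d + 1) (U \ L) :=
          (haus_mono (inter_union_sdiff U L).superset).trans (haus_union_le _ _)
      _ = haus _ (d + 1) (U \ L) := by rw [haus_inter_fst_eq_zero hZ, zero_add]
      _ ≤ haus _ (d + 1) (wrapFst p '' unroll a U) := haus_mono hcut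
      _ ≤ haus _ (d + 1) (unroll a U) := lipschitzWith_wrapFst.lipschitzOnWith.haus_image_le

lemma haus_frontier_unroll_le (hU : IsClosed U) (a : ℝ) :
    haus _ d (frontier (unroll a U))
      ≤ haus _ d (frontier U) + 2 * haus _ d (U ∩ {q | q.fst = (a : AddCircle p)}) := by
  have hend (b : ℝ) (hb : (b : AddCircle p) = a) :
      haus _ d (frontier (unroll a U) ∩ {y | y.fst = b})
        ≤ haus _ d (U ∩ {q | q.fst = (a : AddCircle p)}) := by
    rw [← hb]
    exact (haus_mono (inter_subset_inter_left _
      (isClosedRegion_unroll a U).isClosed.frontier_subset)).trans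
      (haus_unroll_inter_fst_le hU a b d)
  calc haus _ d (frontier (unroll a U))
      ≤ haus _ d (frontier (unroll a U) ∩ WithLp.fst ⁻¹' Ioo a (a + p)) + _ + _ :=
        haus_le_of_subset_preimage_Icc
          ((isClosedRegion_unroll a U).isClosed.frontier_subset.trans
            (unroll_subset_preimage_Icc a U))
    _ ≤ haus _ d (frontier U) + haus _ d (U ∩ {q | q.fst = (a : AddCircle p)})
          + haus _ d (U ∩ {q | q.fst = (a : AddCircle p)}) :=
        add_le_add (add_le_add ((haus_mono (frontier_unroll_inter_subset hU a)).trans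
          (haus_image_unwrapFst_le a d _)) (hend a rfl))
          (hend (a + p) (AddCircle.coe_add_period p a))
    _ = _ := by rw [two_mul, add_assoc]

theorem isoProfile_real_prod_le (hZ : haus Z (d + 1) univ = 0) (hU : IsClosedRegion U)
    (t : AddCircle p) :
    isoProfile (WithLp 2 (ℝ × Z)) (d + 1) (haus _ (d + 1) U)
      ≤ haus _ d (frontier U) + 2 * haus _ d (U ∩ {q | q.fst = t}) := by
  obtain ⟨a, rfl⟩ := QuotientAddGroup.mk_surjective t
  rw [← haus_unroll hZ hU a]
  exact (isoProfile_le_haus_frontier (isClosedRegion_unroll a U)).trans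
    (haus_frontier_unroll_le hU.isClosed a)

end Cut

section Torus

def withLpProdLeftComm (α β γ : Type*) [MetricSpace α] [MetricSpace β] [MetricSpace γ] :
    WithLp 2 (α × WithLp 2 (β × γ)) ≃ᵢ WithLp 2 (β × WithLp 2 (α × γ)) :=
  (IsometryEquiv.withLpProdAssoc 2 α β γ).symm.trans
    ((IsometryEquiv.withLpProdCongr 2 (IsometryEquiv.withLpProdComm 2 α β)
      (IsometryEquiv.refl γ)).trans (IsometryEquiv.withLpProdAssoc 2 β α γ))

lemma finrank_withLp_real_prod_eucSp (n : ℕ) :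
    Module.finrank ℝ (WithLp 2 (ℝ × EucSp n)) = n + 1 := by
  rw [(WithLp.linearEquiv 2 ℝ (ℝ × EucSp n)).finrank_eq, Module.finrank_prod,
    Module.finrank_self, finrank_euclideanSpace_fin, add_comm]

def realProdEucSpIso (n : ℕ) : WithLp 2 (ℝ × EucSp n) ≃ₗᵢ[ℝ] EucSp (n + 1) :=
  ((stdOrthonormalBasis ℝ _).reindex (finCongr (finrank_withLp_real_prod_eucSp n))).repr

def realProdS1RIso (r : ℝ) (n : ℕ) : WithLp 2 (ℝ × S1R r n) ≃ᵢ S1R r (n + 1) :=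
  (withLpProdLeftComm _ _ _).trans
    (IsometryEquiv.withLpProdCongr 2 (IsometryEquiv.refl _) (realProdEucSpIso n).toIsometryEquiv)

lemma haus_S1R_univ_eq_zero (r : ℝ) (n : ℕ) : haus (S1R r n) (n + 2) univ = 0 :=
  haus_univ_eq_zero_of_lipschitzWith lipschitzWith_wrapFst wrapFst_surjective
    (by rw [finrank_withLp_real_prod_eucSp]; omega)

theorem isoProfile_S1R_le {p r : ℝ} [Fact (0 < p)] {n : ℕ}
    {U : Set (WithLp 2 (AddCircle p × S1R r n))} (hU : IsIsoRegion _ (n + 2) U) (t : AddCircle p) :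
    isoProfile (S1R r (n + 1)) (n + 2) (haus _ (n + 2) U)
      ≤ isoProfile (WithLp 2 (AddCircle p × S1R r n)) (n + 2) (haus _ (n + 2) U)
        + 2 * haus _ (n + 1) (U ∩ {q | q.fst = t}) := by
  rw [isoProfile_congr (realProdS1RIso r n), ← hU.2]
  exact isoProfile_real_prod_le (haus_S1R_univ_eq_zero r n) hU.1 t

end Torus

theorem profile_lower_bound_mixed_case_general (r1 r2 : ℝ) (hr1 : 0 < r1) (hr12 : r1 ≤ r2)
    (n : ℕ) (v : ℝ)
    (Ω : Set (T2R r1 r2 n)) (hΩ : IsIsoRegion (T2R r1 r2 n) (n+2) Ω)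
    (hvol : haus (T2R r1 r2 n) (n+2) Ω = ENNReal.ofReal v)
    (hθ2 : thetaMin Ω < ENNReal.ofReal (betaC n r2))
    (hσ2 : sigmaMin Ω < ENNReal.ofReal (betaC n r1)) :
    isoProfile (S1R r2 (n+1)) (n+2) (ENNReal.ofReal v)
      ≤ isoProfile (T2R r1 r2 n) (n+2) (ENNReal.ofReal v)
          + ENNReal.ofReal (2 * betaC n r2) ∧
    isoProfile (S1R r1 (n+1)) (n+2) (ENNReal.ofReal v)
      ≤ isoProfile (T2R r1 r2 n) (n+2) (ENNReal.ofReal v)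
          + ENNReal.ofReal (2 * betaC n r1) := by
  have two_mul_le {x : ℝ≥0∞} {b : ℝ} (h : x < ENNReal.ofReal b) :
      2 * x ≤ ENNReal.ofReal (2 * b) := by
    rw [ENNReal.ofReal_mul zero_le_two, ENNReal.ofReal_ofNat]
    exact mul_le_mul_right h.le 2
  have : Fact (0 < 2 * π * r1) := ⟨by positivity⟩
  have : Fact (0 < 2 * π * r2) := ⟨by have := hr1.trans_le hr12; positivity⟩
  rw [← hvol]
  constructor
  · obtain ⟨t, ht⟩ := iInf_lt_iff.mp hθ2
    exact (isoProfile_S1R_le hΩ t).trans (add_le_add le_rfl (two_mul_le ht))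
  · obtain ⟨s, hs⟩ := iInf_lt_iff.mp hσ2
    set φ := withLpProdLeftComm (Circ r1) (Circ r2) (EucSp n)
    have h := isoProfile_S1R_le (hΩ.image φ) s
    rw [φ.isometry.haus_image, isoProfile_congr φ, ← image_inter_preimage,
      φ.isometry.haus_image] at h
    exact h.trans (add_le_add le_rfl (two_mul_le hs))

/-- Lemma 5 of the paper.
Let `0 < r1 ≤ r2`, `2 ≤ n ≤ 5`, and let `Ω` be an isoperimetric region of volume `v`
in `S¹_{r1} × S¹_{r2} × ℝⁿ` with `0 < θ_m < β_n(r2) < θ_M` and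
`0 < σ_m < β_n(r1) < σ_M`.  Then
`I_{S¹_{r2}×ℝ^{n+1}}(v) − 2β_n(r2) ≤ I_{S¹_{r1}×S¹_{r2}×ℝⁿ}(v)` and
`I_{S¹_{r1}×ℝ^{n+1}}(v) − 2β_n(r1) ≤ I_{S¹_{r1}×S¹_{r2}×ℝⁿ}(v)`
(stated with the subtraction moved to the right-hand side). -/
theorem profile_lower_bound_mixed_case (r1 r2 : ℝ) (hr1 : 0 < r1) (hr12 : r1 ≤ r2)
    (n : ℕ) (hn2 : 2 ≤ n) (hn5 : n ≤ 5) (v : ℝ)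
    (Ω : Set (T2R r1 r2 n)) (hΩ : IsIsoRegion (T2R r1 r2 n) (n+2) Ω)
    (hvol : haus (T2R r1 r2 n) (n+2) Ω = ENNReal.ofReal v)
    (hθ1 : 0 < thetaMin Ω) (hθ2 : thetaMin Ω < ENNReal.ofReal (betaC n r2))
    (hθ3 : ENNReal.ofReal (betaC n r2) < thetaMax Ω)
    (hσ1 : 0 < sigmaMin Ω) (hσ2 : sigmaMin Ω < ENNReal.ofReal (betaC n r1))
    (hσ3 : ENNReal.ofReal (betaC n r1) < sigmaMax Ω) :
    isoProfile (S1R r2 (n+1)) (n+2) (ENNReal.ofReal v)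
      ≤ isoProfile (T2R r1 r2 n) (n+2) (ENNReal.ofReal v)
          + ENNReal.ofReal (2 * betaC n r2) ∧
    isoProfile (S1R r1 (n+1)) (n+2) (ENNReal.ofReal v)
      ≤ isoProfile (T2R r1 r2 n) (n+2) (ENNReal.ofReal v)
          + ENNReal.ofReal (2 * betaC n r1) :=
  profile_lower_bound_mixed_case_general r1 r2 hr1 hr12 n v Ω hΩ hvol hθ2 hσ2

end
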